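/- For every δ with 0 < δ < π/4, the function ε₀(t) = (t − δ)³ · (12(π − 3δ − t)·cos δ − (π − 4δ)(2π − 5δ − 3t)·sin δ) / (3(π − 4δ)³) satisfies ε₀(t) ≥ 0 for all t ∈ [δ, π/2 − δ]. -/

import Mathlib

open Real

/-- The explicit polynomial middle piece of the profile-modification function. -/
noncomputable def eps0 (δ t : ℝ) : ℝ :=
  (t - δ) ^ 3 *
    (12 * (π - 3 * δ - t) * Real.cos δ - (π - 4 * δ) * (2 * π - 5 * δ - 3 * t) * Real.sin δ) /
    (3 * (π - 4 * δ) ^ 3)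

/-! The second factor of `eps0 δ` is affine in `t`, so it suffices to check it at the endpoints
`t = δ` and `t = π/2 - δ`. There it factors as `2(π - 4δ)(6 cos δ - (π - 4δ) sin δ)` and
`(π/2 - 2δ)(12 cos δ - (π - 4δ) sin δ)`, both nonnegative because `sin δ ≤ cos δ` and
`π - 4δ < 6`. -/

lemma affine_nonneg_of_nonneg_of_nonneg {a b t p q : ℝ} (ht : t ∈ Set.Icc a b)
    (ha : 0 ≤ p + q * a) (hb : 0 ≤ p + q * b) : 0 ≤ p + q * t := by
  rcases le_total 0 q with hq | hq
  · nlinarith [ht.1]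
  · nlinarith [ht.2]

lemma sin_le_cos_of_le_pi_div_four {x : ℝ} (hx₀ : 0 ≤ x) (hx : x ≤ π / 4) :
    sin x ≤ cos x :=
  calc sin x ≤ sin (π / 4) := sin_le_sin_of_le_of_le_pi_div_two (by linarith) (by linarith) hx
    _ = cos (π / 4) := by rw [sin_pi_div_four, cos_pi_div_four]
    _ ≤ cos x := cos_le_cos_of_nonneg_of_le_pi hx₀ (by linarith [pi_pos]) hx

lemma mul_sin_le_six_mul_cos {δ : ℝ} (hδ : 0 ≤ δ) (hδ' : δ ≤ π / 4) :
    (π - 4 * δ) * sin δ ≤ 6 * cos δ := by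
  have hsin : 0 ≤ sin δ := sin_nonneg_of_nonneg_of_le_pi hδ (by linarith)
  have hsc : sin δ ≤ cos δ := sin_le_cos_of_le_pi_div_four hδ hδ'
  nlinarith [pi_lt_four]

lemma eps0_factor_nonneg {δ t : ℝ} (hδ : 0 ≤ δ) (hδ' : δ ≤ π / 4)
    (ht : t ∈ Set.Icc δ (π / 2 - δ)) :
    0 ≤ 12 * (π - 3 * δ - t) * cos δ - (π - 4 * δ) * (2 * π - 5 * δ - 3 * t) * sin δ := by
  have key := mul_sin_le_six_mul_cos hδ hδ'
  have hcos : 0 ≤ cos δ := cos_nonneg_of_mem_Icc ⟨by linarith, by linarith⟩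
  set p := 12 * (π - 3 * δ) * cos δ - (π - 4 * δ) * (2 * π - 5 * δ) * sin δ
  set q := 3 * (π - 4 * δ) * sin δ - 12 * cos δ
  have hleft : p + q * δ = 2 * (π - 4 * δ) * (6 * cos δ - (π - 4 * δ) * sin δ) := by ring
  have hright : p + q * (π / 2 - δ) =
      (π / 2 - 2 * δ) * (12 * cos δ - (π - 4 * δ) * sin δ) := by ring
  calc 0 ≤ p + q * t := by
        refine affine_nonneg_of_nonneg_of_nonneg ht ?_ ?_
        · rw [hleft]; exact mul_nonneg (by linarith) (by linarith)
        · rw [hright]; exact mul_nonneg (by linarith) (by linarith)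
    _ = _ := by ring

/-- For `0 < δ < π/4`, the function `ε₀` is nonnegative on `[δ, π/2 - δ]`. -/
theorem stmt_9 (δ : ℝ) (hδ : 0 < δ) (hδ' : δ < π / 4) :
    ∀ t ∈ Set.Icc δ (π / 2 - δ), 0 ≤ eps0 δ t := by
  intro t ht
  have hcube : 0 ≤ (t - δ) ^ 3 := pow_nonneg (sub_nonneg.mpr ht.1) 3
  have hden : 0 < 3 * (π - 4 * δ) ^ 3 := by
    have : 0 < π - 4 * δ := by linarith
    positivity
  exact div_nonneg (mul_nonneg hcube (eps0_factor_nonneg hδ.le hδ'.le ht)) hden.le
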